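/- arXiv:1509.07910 — 5 statements merged into one kernel-verified Lean document; each statement's English description precedes it below -/
import Mathlib

section
/- Let n ≥ 1 and let u : ℝⁿ → ℝⁿ be a continuous monotone function. Then the map g : ℝⁿ → ℝⁿ defined by g(x) = x + u(x) is surjective (hence, combined with the expansiveness inequality ‖x − y‖ ≤ ‖g(x) − g(y)‖, a bijection of ℝⁿ onto itself). -/
set_option maxHeartbeats 1000000


open scoped RealInnerProductSpace
open Filter Module

private theorem minty_aux : ∀ (m : ℕ) (E : Type) [NormedAddCommGroup E]
    [InnerProductSpace ℝ E] [FiniteDimensional ℝ E], Module.finrank ℝ E = m →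
    ∀ u : E → E, Continuous u → (∀ x y, ⟪u x - u y, x - y⟫ ≥ 0) →
    Function.Surjective (fun x => x + u x) := by
  intro m
  induction m with
  | zero =>
    intro E _ _ _ hm u _ _ b
    have : Subsingleton E := Module.finrank_zero_iff.mp hm
    exact ⟨0, Subsingleton.elim _ _⟩
  | succ m ih =>
    intro E _ _ _ hm u hu hmono b
    -- choose a unit vector `e`
    have hpos : 0 < Module.finrank ℝ E := by omega
    have : Nontrivial E := Module.nontrivial_of_finrank_pos hpos
    obtain ⟨v, hv⟩ := exists_ne (0 : E)
    obtain ⟨e, he⟩ : ∃ e : E, ‖e‖ = 1 := ⟨‖v‖⁻¹ • v, norm_smul_inv_norm hv⟩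
    have he0 : e ≠ 0 := by
      intro h; rw [h, norm_zero] at he; norm_num at he
    haveI : Fact (Module.finrank ℝ E = m + 1) := ⟨hm⟩
    set F : Submodule ℝ E := (ℝ ∙ e)ᗮ with hF_def
    have hF : Module.finrank ℝ F = m := Submodule.finrank_orthogonal_span_singleton he0
    set P := Submodule.orthogonalProjectionOnto F with hP_def
    have hPe : P e = 0 :=
      Submodule.orthogonalProjectionOnto_eq_zero_iff.mpr
        ((ℝ ∙ e).le_orthogonal_orthogonal (Submodule.mem_span_singleton_self e))
    have hinner_e : ∀ w : F, ⟪(w : E), e⟫ = 0 := by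
      intro w
      have := w.2
      rw [Submodule.mem_orthogonal] at this
      have h := this e (Submodule.mem_span_singleton_self e)
      rwa [real_inner_comm] at h
    -- the parameterized reduced map on F
    set v' : ℝ → F → F := fun t y => P (u ((y : E) + t • e)) with hv'_def
    have hv'cont : ∀ t, Continuous (v' t) := by
      intro t
      exact P.continuous.comp (hu.comp (continuous_subtype_val.add continuous_const))
    have hv'mono : ∀ t (y₁ y₂ : F), ⟪v' t y₁ - v' t y₂, y₁ - y₂⟫ ≥ 0 := by
      intro t y₁ y₂
      have hx : ((y₁ : E) + t • e) - ((y₂ : E) + t • e) = ((y₁ - y₂ : F) : E) := by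
        push_cast; abel
      have : ⟪v' t y₁ - v' t y₂, y₁ - y₂⟫
          = ⟪u ((y₁ : E) + t • e) - u ((y₂ : E) + t • e), ((y₁ - y₂ : F) : E)⟫ := by
        rw [hv'_def]
        simp only [← map_sub]
        exact Submodule.inner_orthogonalProjection_eq_of_mem_right (K := F) (y₁ - y₂) _
      rw [this, ← hx]
      exact hmono _ _
    -- solutions in F for each t
    have surjF : ∀ t : ℝ, Function.Surjective (fun y : F => y + v' t y) :=
      fun t => ih F hF (v' t) (hv'cont t) (hv'mono t)
    choose Y hY using fun t => surjF t (P b)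
    -- the continuity estimate for Y
    have hYest : ∀ t₁ t₂, ‖Y t₁ - Y t₂‖
        ≤ ‖u ((Y t₂ : E) + t₂ • e) - u ((Y t₂ : E) + t₁ • e)‖ := by
      intro t₁ t₂
      set y₁ := Y t₁; set y₂ := Y t₂
      set d : F := v' t₂ y₂ - v' t₁ y₂ with hd_def
      have h1 : ⟪v' t₁ y₁ - v' t₁ y₂, y₁ - y₂⟫ ≥ 0 := hv'mono t₁ y₁ y₂
      have e1 : v' t₁ y₁ = P b - y₁ := eq_sub_of_add_eq' (hY t₁)
      have e2 : P b = y₂ + v' t₂ y₂ := (hY t₂).symm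
      have e3 : v' t₁ y₁ - v' t₁ y₂ = (y₂ - y₁) + d := by
        rw [e1, e2, hd_def]; abel
      rw [e3, inner_add_left] at h1
      have h4 : ⟪y₂ - y₁, y₁ - y₂⟫ = -‖y₁ - y₂‖ ^ 2 := by
        rw [show y₂ - y₁ = -(y₁ - y₂) by abel, inner_neg_left,
          real_inner_self_eq_norm_sq]
      have h5 : ‖y₁ - y₂‖ ^ 2 ≤ ⟪d, y₁ - y₂⟫ := by rw [h4] at h1; linarith
      have h6 : ⟪d, y₁ - y₂⟫ ≤ ‖d‖ * ‖y₁ - y₂‖ := real_inner_le_norm d (y₁ - y₂)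
      have h7 : ‖y₁ - y₂‖ ≤ ‖d‖ := by nlinarith [norm_nonneg (y₁ - y₂), norm_nonneg d]
      refine h7.trans ?_
      have : d = P (u ((y₂ : E) + t₂ • e) - u ((y₂ : E) + t₁ • e)) := by
        rw [hd_def, hv'_def, map_sub]
      rw [this]
      calc ‖P (u ((y₂ : E) + t₂ • e) - u ((y₂ : E) + t₁ • e))‖
          ≤ ‖P‖ * ‖u ((y₂ : E) + t₂ • e) - u ((y₂ : E) + t₁ • e)‖ := P.le_opNorm _
        _ ≤ 1 * ‖u ((y₂ : E) + t₂ • e) - u ((y₂ : E) + t₁ • e)‖ := by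
            gcongr; exact Submodule.orthogonalProjection_norm_le F
        _ = _ := one_mul _
    have hYcont : Continuous Y := by
      rw [continuous_iff_continuousAt]
      intro t₀
      have hbnd : Tendsto (fun t => ‖u ((Y t₀ : E) + t₀ • e) - u ((Y t₀ : E) + t • e)‖)
          (nhds t₀) (nhds 0) := by
        have hc : Continuous (fun t : ℝ =>
            ‖u ((Y t₀ : E) + t₀ • e) - u ((Y t₀ : E) + t • e)‖) := by
          continuity
        have h0 : ‖u ((Y t₀ : E) + t₀ • e) - u ((Y t₀ : E) + t₀ • e)‖ = 0 := by simp
        simpa [h0] using hc.tendsto t₀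
      have hsq : Tendsto (fun t => ‖Y t - Y t₀‖) (nhds t₀) (nhds 0) :=
        squeeze_zero (fun t => norm_nonneg _) (fun t => hYest t t₀) hbnd
      have := tendsto_zero_iff_norm_tendsto_zero.mpr hsq
      have : Tendsto (fun t => (Y t - Y t₀) + Y t₀) (nhds t₀) (nhds (0 + Y t₀)) :=
        this.add tendsto_const_nhds
      simpa [ContinuousAt] using this
    -- the full curve and the scalar function
    obtain ⟨x, hx⟩ : ∃ x : ℝ → E, ∀ t, x t = (Y t : E) + t • e := ⟨_, fun _ => rfl⟩
    have hxcont : Continuous x := by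
      have : Continuous fun t : ℝ => ((Y t : E) + t • e) :=
        (continuous_subtype_val.comp hYcont).add (continuous_id.smul continuous_const)
      simpa [funext hx] using this
    have hPg : ∀ t, P (x t + u (x t)) = P b := by
      intro t
      have h1 : P (x t) = Y t := by
        rw [hx t]
        simp only [map_add, map_smul, hPe, smul_zero, add_zero]
        exact Submodule.orthogonalProjection_mem_subspace_eq_self (Y t)
      have h2 : P (u (x t)) = v' t (Y t) := by rw [hx t]
      rw [map_add, h1, h2]
      exact hY t
    obtain ⟨ψ, hψ⟩ : ∃ ψ : ℝ → ℝ, ∀ t, ψ t = ⟪x t + u (x t), e⟫ := ⟨_, fun _ => rfl⟩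
    have hψcont : Continuous ψ := by
      have : Continuous fun t => ⟪x t + u (x t), e⟫ :=
        (hxcont.add (hu.comp hxcont)).inner continuous_const
      simpa [funext hψ] using this
    have hψmono : ∀ t₁ t₂, (t₂ - t₁) * (ψ t₂ - ψ t₁) ≥ (t₂ - t₁) ^ 2 := by
      intro t₁ t₂
      have hxsub : x t₂ - x t₁ = ((Y t₂ - Y t₁ : F) : E) + (t₂ - t₁) • e := by
        rw [hx t₁, hx t₂]; push_cast; rw [sub_smul]; abel
      have hm0 : ⟪(x t₂ + u (x t₂)) - (x t₁ + u (x t₁)), x t₂ - x t₁⟫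
          ≥ ‖x t₂ - x t₁‖ ^ 2 := by
        have hsp : (x t₂ + u (x t₂)) - (x t₁ + u (x t₁))
            = (x t₂ - x t₁) + (u (x t₂) - u (x t₁)) := by abel
        rw [hsp, inner_add_left, real_inner_self_eq_norm_sq]
        have := hmono (x t₂) (x t₁)
        linarith
      have hterm1 : ⟪(x t₂ + u (x t₂)) - (x t₁ + u (x t₁)), ((Y t₂ - Y t₁ : F) : E)⟫ = 0 := by
        have h := Submodule.inner_orthogonalProjection_eq_of_mem_right (K := F) (Y t₂ - Y t₁)
          ((x t₂ + u (x t₂)) - (x t₁ + u (x t₁)))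
        rw [← h, map_sub, hPg, hPg, sub_self, inner_zero_left]
      have hsplit : ⟪(x t₂ + u (x t₂)) - (x t₁ + u (x t₁)), x t₂ - x t₁⟫
          = (t₂ - t₁) * ⟪(x t₂ + u (x t₂)) - (x t₁ + u (x t₁)), e⟫ := by
        rw [hxsub, inner_add_right, hterm1, zero_add, real_inner_smul_right]
      have hpyth : ‖x t₂ - x t₁‖ ^ 2 ≥ (t₂ - t₁) ^ 2 := by
        rw [hxsub, norm_add_sq_real]
        have h0 : ⟪((Y t₂ - Y t₁ : F) : E), (t₂ - t₁) • e⟫ = 0 := by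
          rw [real_inner_smul_right, hinner_e (Y t₂ - Y t₁), mul_zero]
        rw [h0]
        have hne : ‖(t₂ - t₁) • e‖ = |t₂ - t₁| := by
          rw [norm_smul, he, Real.norm_eq_abs, mul_one]
        rw [hne, sq_abs]
        nlinarith [sq_nonneg ‖((Y t₂ - Y t₁ : F) : E)‖]
      have hinner_sub : ⟪(x t₂ + u (x t₂)) - (x t₁ + u (x t₁)), e⟫ = ψ t₂ - ψ t₁ := by
        rw [inner_sub_left, hψ t₁, hψ t₂]
      rw [hsplit, hinner_sub] at hm0
      linarith
    have hψle : ∀ t₁ t₂, t₁ ≤ t₂ → t₂ - t₁ ≤ ψ t₂ - ψ t₁ := by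
      intro t₁ t₂ h
      rcases eq_or_lt_of_le h with rfl | hlt
      · simp
      · have := hψmono t₁ t₂
        have h2 : 0 < t₂ - t₁ := by linarith
        nlinarith
    have htop : Tendsto ψ atTop atTop := by
      refine tendsto_atTop_mono' atTop ?_ (tendsto_atTop_add_const_left _ (ψ 0) tendsto_id)
      filter_upwards [eventually_ge_atTop (0 : ℝ)] with t ht
      have := hψle 0 t ht
      show ψ 0 + id t ≤ ψ t
      simp only [id]; linarith
    have hbot : Tendsto ψ atBot atBot := by
      refine tendsto_atBot_mono' atBot ?_ (tendsto_atBot_add_const_left _ (ψ 0) tendsto_id)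
      filter_upwards [eventually_le_atBot (0 : ℝ)] with t ht
      have := hψle t 0 ht
      show ψ t ≤ ψ 0 + id t
      simp only [id]; linarith
    obtain ⟨t, ht⟩ := (hψcont.surjective htop hbot) ⟪b, e⟫
    refine ⟨x t, ?_⟩
    show x t + u (x t) = b
    have hPw : P (x t + u (x t) - b) = 0 := by rw [map_sub, hPg, sub_self]
    have hwe : ⟪x t + u (x t) - b, e⟫ = 0 := by
      rw [inner_sub_left, ← hψ t, ht, sub_self]
    have hwmem : x t + u (x t) - b ∈ ℝ ∙ e := by
      have h2 := Submodule.orthogonalProjectionOnto_eq_zero_iff.mp hPw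
      rwa [hF_def, Submodule.orthogonal_orthogonal] at h2
    obtain ⟨c, hc⟩ := Submodule.mem_span_singleton.mp hwmem
    have hc0 : c = 0 := by
      have h1 : ⟪x t + u (x t) - b, e⟫ = c := by
        rw [← hc, real_inner_smul_left, real_inner_self_eq_norm_sq, he]
        ring
      rw [hwe] at h1; exact h1.symm
    have hw0 : x t + u (x t) - b = 0 := by rw [← hc, hc0, zero_smul]
    exact sub_eq_zero.mp hw0

/-- Minty's fact: for a continuous monotone `u : ℝⁿ → ℝⁿ`, the map `g = I + u` is
surjective (hence, together with expansiveness, a bijection of ℝⁿ). -/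
theorem minty_surjective
    (n : ℕ) (hn : 1 ≤ n)
    (u : EuclideanSpace ℝ (Fin n) → EuclideanSpace ℝ (Fin n))
    (hu_cont : Continuous u)
    (hu_mono : ∀ x y, ⟪u x - u y, x - y⟫ ≥ 0)
    (g : EuclideanSpace ℝ (Fin n) → EuclideanSpace ℝ (Fin n))
    (hg : ∀ x, g x = x + u x) :
    Function.Surjective g := by
  intro b
  obtain ⟨x, hx⟩ := minty_aux n (EuclideanSpace ℝ (Fin n))
    (finrank_euclideanSpace_fin) u hu_cont hu_mono b
  exact ⟨x, by rw [hg]; exact hx⟩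
end

section
/- Let n ≥ 1, let u : ℝⁿ → ℝⁿ be a continuous monotone function, let g(x) = x + u(x), and let f : ℝⁿ → ℝⁿ be a two-sided inverse of g (i.e. f ∘ g = id and g ∘ f = id). Fix z ∈ ℝⁿ and set ẑ = u(z) + z = g(z). Then the following are equivalent: (1) u is (Fréchet) differentiable at z; (2) f is differentiable at ẑ and the derivative fderiv ℝ f ẑ is invertible (as a linear map ℝⁿ → ℝⁿ). -/
open scoped RealInnerProductSpace

/-- Differentiability of a monotone map `u` at `z` is equivalent to differentiability of
`f = (u + I)⁻¹` at `zhat = u(z) + z` together with invertibility of the derivative of `f` there. -/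
theorem monotone_diff_iff_inverse_diff
    (n : ℕ) (hn : 1 ≤ n)
    (u : EuclideanSpace ℝ (Fin n) → EuclideanSpace ℝ (Fin n))
    (hu_cont : Continuous u)
    (hu_mono : ∀ x y, ⟪u x - u y, x - y⟫ ≥ 0)
    (g : EuclideanSpace ℝ (Fin n) → EuclideanSpace ℝ (Fin n))
    (hg : ∀ x, g x = x + u x)
    (f : EuclideanSpace ℝ (Fin n) → EuclideanSpace ℝ (Fin n))
    (hfg : f ∘ g = id) (hgf : g ∘ f = id)
    (z zhat : EuclideanSpace ℝ (Fin n)) (hzhat : zhat = u z + z) :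
    DifferentiableAt ℝ u z ↔
      (DifferentiableAt ℝ f zhat ∧
        ∃ e : EuclideanSpace ℝ (Fin n) ≃L[ℝ] EuclideanSpace ℝ (Fin n),
          (e : EuclideanSpace ℝ (Fin n) →L[ℝ] EuclideanSpace ℝ (Fin n)) = fderiv ℝ f zhat) := by
  have hgz : g z = zhat := by rw [hg, hzhat, add_comm]
  have hfz : f zhat = z := by
    have := congrFun hfg z
    simpa [Function.comp, hgz] using this
  have hg_cont : Continuous g := by
    have : g = fun x => x + u x := funext hg
    rw [this]; exact continuous_id.add hu_cont
  -- f is 1-Lipschitz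
  have hf_lip : LipschitzWith 1 f := by
    refine LipschitzWith.of_dist_le_mul fun a b => ?_
    have hga : g (f a) = a := congrFun hgf a
    have hgb : g (f b) = b := congrFun hgf b
    set x := f a; set y := f b
    have key : ‖x - y‖ ^ 2 ≤ ‖g x - g y‖ * ‖x - y‖ := by
      have h1 : ⟪g x - g y, x - y⟫ ≤ ‖g x - g y‖ * ‖x - y‖ :=
        real_inner_le_norm _ _
      have h2 : ⟪g x - g y, x - y⟫ = ‖x - y‖ ^ 2 + ⟪u x - u y, x - y⟫ := by
        rw [hg x, hg y]
        have : (x + u x) - (y + u y) = (x - y) + (u x - u y) := by abel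
        rw [this, inner_add_left, real_inner_self_eq_norm_sq]
      have h3 := hu_mono x y
      linarith
    have hle : ‖x - y‖ ≤ ‖g x - g y‖ := by
      rcases eq_or_ne (‖x - y‖) 0 with h | h
      · rw [h]; positivity
      · have hpos : 0 < ‖x - y‖ := lt_of_le_of_ne (norm_nonneg _) (Ne.symm h)
        nlinarith
    rw [hga, hgb] at hle
    simpa [dist_eq_norm] using hle
  constructor
  · intro hu
    have hu' : HasFDerivAt u (fderiv ℝ u z) z := hu.hasFDerivAt
    set A : EuclideanSpace ℝ (Fin n) →L[ℝ] EuclideanSpace ℝ (Fin n) := ContinuousLinearMap.id ℝ (EuclideanSpace ℝ (Fin n)) + fderiv ℝ u z with hA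
    -- positive semidefiniteness of the derivative
    have hpsd : ∀ v : EuclideanSpace ℝ (Fin n), 0 ≤ ⟪fderiv ℝ u z v, v⟫ := by
      intro v
      have hline : HasDerivAt (fun t : ℝ => u (z + t • v)) (fderiv ℝ u z v) 0 := by
        have h1 : HasDerivAt (fun t : ℝ => z + t • v) v 0 := by
          simpa using ((hasDerivAt_id (0 : ℝ)).smul_const v).const_add z
        have h2 : HasFDerivAt u (fderiv ℝ u z) (z + (0 : ℝ) • v) := by
          simpa using hu'
        exact h2.comp_hasDerivAt 0 h1
      have hslope := hasDerivAt_iff_tendsto_slope.1 hline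
      have htend : Filter.Tendsto (fun t : ℝ => ⟪slope (fun t : ℝ => u (z + t • v)) 0 t, v⟫)
          (nhdsWithin 0 {(0:ℝ)}ᶜ) (nhds ⟪fderiv ℝ u z v, v⟫) :=
        (hslope.inner tendsto_const_nhds)
      refine ge_of_tendsto htend ?_
      filter_upwards [self_mem_nhdsWithin] with t ht
      have ht' : t ≠ 0 := ht
      have hmono := hu_mono (z + t • v) z
      have hsub : (z + t • v) - z = t • v := by abel
      rw [hsub] at hmono
      have hkey : 0 ≤ t * ⟪u (z + t • v) - u z, v⟫ := by
        rwa [real_inner_smul_right, ge_iff_le] at hmono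
      have hsl : slope (fun t : ℝ => u (z + t • v)) 0 t
          = t⁻¹ • (u (z + t • v) - u z) := by
        simp [slope_def_field, slope, vsub_eq_sub]
      rw [hsl, real_inner_smul_left]
      have heq : t⁻¹ * ⟪u (z + t • v) - u z, v⟫
          = t⁻¹ * t⁻¹ * (t * ⟪u (z + t • v) - u z, v⟫) := by
        field_simp
      rw [heq]
      exact mul_nonneg (mul_self_nonneg _) hkey
    -- A is injective
    have hinj : Function.Injective A := by
      intro v w hvw
      have h0 : A (v - w) = 0 := by rw [map_sub, hvw, sub_self]
      have : ‖v - w‖ ^ 2 ≤ 0 := by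
        have hAapp : A (v - w) = (v - w) + fderiv ℝ u z (v - w) := rfl
        have h1 : ⟪A (v - w), v - w⟫ = ‖v - w‖ ^ 2 + ⟪fderiv ℝ u z (v - w), v - w⟫ := by
          rw [hAapp, inner_add_left, real_inner_self_eq_norm_sq]
        have h2 := hpsd (v - w)
        have h3 : ⟪A (v - w), v - w⟫ = 0 := by rw [h0, inner_zero_left]
        linarith
      have : v - w = 0 := by
        have := norm_nonneg (v - w)
        have hn0 : ‖v - w‖ = 0 := by nlinarith
        exact norm_eq_zero.mp hn0
      exact sub_eq_zero.mp this
    -- build the continuous linear equivalence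
    let Aeq : EuclideanSpace ℝ (Fin n) ≃L[ℝ] EuclideanSpace ℝ (Fin n) :=
      (LinearEquiv.ofInjectiveEndo (A : EuclideanSpace ℝ (Fin n) →ₗ[ℝ] EuclideanSpace ℝ (Fin n))
        hinj).toContinuousLinearEquiv
    have hAeq : (Aeq : EuclideanSpace ℝ (Fin n) →L[ℝ] EuclideanSpace ℝ (Fin n)) = A := by
      ext x
      simp [Aeq, LinearEquiv.coe_toContinuousLinearEquiv, LinearEquiv.coe_ofInjectiveEndo]
    have hgderiv : HasFDerivAt g
        (Aeq : EuclideanSpace ℝ (Fin n) →L[ℝ] EuclideanSpace ℝ (Fin n)) z := by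
      rw [hAeq]
      have h1 : HasFDerivAt (fun x => x + u x) A z := by
        exact (hasFDerivAt_id z).add hu'
      have : g = fun x => x + u x := funext hg
      rw [this]
      exact h1
    have hgderiv' : HasFDerivAt g
        (Aeq : EuclideanSpace ℝ (Fin n) →L[ℝ] EuclideanSpace ℝ (Fin n)) (f zhat) := by
      rwa [hfz]
    have hfderiv : HasFDerivAt f
        (Aeq.symm : EuclideanSpace ℝ (Fin n) →L[ℝ] EuclideanSpace ℝ (Fin n)) zhat :=
      hgderiv'.of_local_left_inverse hf_lip.continuous.continuousAt
        (Filter.Eventually.of_forall fun y => congrFun hgf y)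
    refine ⟨hfderiv.differentiableAt, Aeq.symm, ?_⟩
    rw [hfderiv.fderiv]
  · rintro ⟨hfd, e, he⟩
    have hfde : HasFDerivAt f
        (e : EuclideanSpace ℝ (Fin n) →L[ℝ] EuclideanSpace ℝ (Fin n)) zhat := by
      rw [he]
      exact hfd.hasFDerivAt
    have hfde' : HasFDerivAt f
        (e : EuclideanSpace ℝ (Fin n) →L[ℝ] EuclideanSpace ℝ (Fin n)) (g z) := by
      rwa [hgz]
    have hgd : HasFDerivAt g
        (e.symm : EuclideanSpace ℝ (Fin n) →L[ℝ] EuclideanSpace ℝ (Fin n)) z :=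
      hfde'.of_local_left_inverse hg_cont.continuousAt
        (Filter.Eventually.of_forall fun y => congrFun hfg y)
    have hud : DifferentiableAt ℝ (fun x => g x - x) z :=
      hgd.differentiableAt.sub differentiableAt_id
    have hueq : u = fun x => g x - x := funext fun x => by rw [hg, add_sub_cancel_left]
    rw [hueq]
    exact hud
end

section
/- Let n ≥ 1 and let f : ℝⁿ → ℝⁿ be a Lipschitz function. Suppose f is differentiable at z ∈ ℝⁿ and the derivative f′(z) = fderiv ℝ f z is singular (not invertible, i.e. its determinant is 0). Then for every ε > 0 there exists an open set O ⊆ ℝⁿ with z ∈ O, 0 < λ(O) < ∞, and λ(f(O)) ≤ ε · λ(O), where λ denotes Lebesgue measure and f(O) is the image of O under f. -/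
open MeasureTheory Metric Pointwise

/-- Critical value lemma: if a Lipschitz `f : ℝⁿ → ℝⁿ` has a singular derivative at `z`,
then `z` has open neighbourhoods of positive finite measure on which the image of `f`
has measure at most `ε` times the measure of the neighbourhood. -/
theorem critical_value_lemma
    (n : ℕ) (hn : 1 ≤ n)
    (f : EuclideanSpace ℝ (Fin n) → EuclideanSpace ℝ (Fin n))
    (hf : ∃ K : ℝ, 0 ≤ K ∧ ∀ x y, ‖f x - f y‖ ≤ K * ‖x - y‖)
    (z : EuclideanSpace ℝ (Fin n))
    (hdiff : DifferentiableAt ℝ f z)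
    (hsing : LinearMap.det ((fderiv ℝ f z :
      EuclideanSpace ℝ (Fin n) →L[ℝ] EuclideanSpace ℝ (Fin n)) :
      EuclideanSpace ℝ (Fin n) →ₗ[ℝ] EuclideanSpace ℝ (Fin n)) = 0) :
    ∀ ε : ℝ, 0 < ε →
      ∃ O : Set (EuclideanSpace ℝ (Fin n)), IsOpen O ∧ z ∈ O ∧
        0 < volume O ∧ volume O < ⊤ ∧
        volume (f '' O) ≤ ENNReal.ofReal ε * volume O := by
  intro ε εpos
  haveI : NeZero n := ⟨by omega⟩
  haveI : Nontrivial (EuclideanSpace ℝ (Fin n)) := inferInstance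
  set A := fderiv ℝ f z with hA
  set S : Set (EuclideanSpace ℝ (Fin n)) := A '' closedBall 0 1 with hS
  -- the image of the unit ball under A is null
  have hS0 : volume S = 0 := by
    rw [hS, Measure.addHaar_image_continuousLinearMap]
    rw [show LinearMap.det ((A : EuclideanSpace ℝ (Fin n) →L[ℝ] EuclideanSpace ℝ (Fin n)) :
      EuclideanSpace ℝ (Fin n) →ₗ[ℝ] EuclideanSpace ℝ (Fin n)) = 0 from hsing]
    simp
  -- choose δ > 0 with small cthickening measure
  have hballpos : (0 : ENNReal) < volume (ball (0 : EuclideanSpace ℝ (Fin n)) 1) :=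
    measure_ball_pos _ _ one_pos
  have htend : Filter.Tendsto (fun δ => volume (cthickening δ S)) (nhdsWithin 0 (Set.Ioi 0))
      (nhds 0) := by
    have hc : IsCompact S := (isCompact_closedBall _ _).image A.continuous
    have := tendsto_measure_cthickening_of_isCompact (μ := volume) hc
    rw [hS0] at this
    exact this.mono_left nhdsWithin_le_nhds
  have hpos : (0 : ENNReal) < ENNReal.ofReal ε * volume (ball (0 : EuclideanSpace ℝ (Fin n)) 1) :=
    ENNReal.mul_pos (ne_of_gt (ENNReal.ofReal_pos.2 εpos)) (ne_of_gt hballpos)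
  obtain ⟨δ, hδmem, hδ⟩ : ∃ δ ∈ Set.Ioi (0:ℝ),
      volume (cthickening δ S) <
        ENNReal.ofReal ε * volume (ball (0 : EuclideanSpace ℝ (Fin n)) 1) := by
    have := htend.eventually_lt_const hpos
    rcases (this.and self_mem_nhdsWithin).exists with ⟨δ, h1, h2⟩
    exact ⟨δ, h2, h1⟩
  have δpos : 0 < δ := hδmem
  -- choose r > 0 using differentiability
  have hlo := hdiff.hasFDerivAt.isLittleO.def δpos
  rw [Metric.eventually_nhds_iff_ball] at hlo
  obtain ⟨r, rpos, hr⟩ := hlo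
  refine ⟨ball z r, isOpen_ball, mem_ball_self rpos, measure_ball_pos _ _ rpos,
    measure_ball_lt_top, ?_⟩
  -- key inclusion
  have hincl : f '' ball z r ⊆ (f z) +ᵥ (r • cthickening δ S : Set (EuclideanSpace ℝ (Fin n))) := by
    rintro - ⟨x, hx, rfl⟩
    have hxr : ‖x - z‖ < r := by rwa [mem_ball, dist_eq_norm] at hx
    have hb := hr x hx
    refine Set.mem_vadd_set.2 ⟨r • (r⁻¹ • (f x - f z)), ?_, ?_⟩
    · refine Set.smul_mem_smul_set ?_
      apply mem_cthickening_of_dist_le _ (A (r⁻¹ • (x - z))) δ S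
        ⟨r⁻¹ • (x - z), ?_, rfl⟩
      · rw [dist_eq_norm]
        have heq : r⁻¹ • (f x - f z) - A (r⁻¹ • (x - z))
            = r⁻¹ • (f x - f z - A (x - z)) := by
          rw [A.map_smul]; module
        rw [heq, norm_smul, Real.norm_eq_abs, abs_of_pos (inv_pos.2 rpos)]
        calc r⁻¹ * ‖f x - f z - A (x - z)‖ ≤ r⁻¹ * (δ * ‖x - z‖) :=
              mul_le_mul_of_nonneg_left hb (inv_pos.2 rpos).le
          _ ≤ δ := by
              rw [mul_comm δ, ← mul_assoc]
              have h1 : r⁻¹ * ‖x - z‖ ≤ 1 := by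
                rw [inv_mul_le_iff₀ rpos, mul_one]; exact hxr.le
              calc r⁻¹ * ‖x - z‖ * δ ≤ 1 * δ :=
                    mul_le_mul_of_nonneg_right h1 δpos.le
                _ = δ := one_mul δ
      · rw [mem_closedBall, dist_zero_right, norm_smul, Real.norm_eq_abs,
          abs_of_pos (inv_pos.2 rpos), inv_mul_le_iff₀ rpos, mul_one]
        exact hxr.le
    · rw [smul_inv_smul₀ rpos.ne', vadd_eq_add]
      abel
  calc volume (f '' ball z r) ≤ volume ((f z) +ᵥ (r • cthickening δ S : Set (EuclideanSpace ℝ (Fin n)))) :=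
        measure_mono hincl
    _ = volume (r • cthickening δ S) := measure_vadd _ _ _
    _ = ENNReal.ofReal (r ^ Module.finrank ℝ (EuclideanSpace ℝ (Fin n))) *
        volume (cthickening δ S) :=
        Measure.addHaar_smul_of_nonneg _ rpos.le _
    _ ≤ ENNReal.ofReal (r ^ Module.finrank ℝ (EuclideanSpace ℝ (Fin n))) *
        (ENNReal.ofReal ε * volume (ball (0 : EuclideanSpace ℝ (Fin n)) 1)) :=
        mul_le_mul_right hδ.le _
    _ = ENNReal.ofReal ε * (ENNReal.ofReal (r ^ Module.finrank ℝ (EuclideanSpace ℝ (Fin n))) *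
        volume (ball (0 : EuclideanSpace ℝ (Fin n)) 1)) := by ring
    _ = ENNReal.ofReal ε * volume (ball z r) := by
        rw [Measure.addHaar_ball _ _ rpos.le]
end

section
/- Let n ≥ 1, let H ⊆ ℝⁿ be an affine subspace of dimension n − 1 (a hyperplane), let c ∈ ℝⁿ and let R, δ > 0. Then the δ-thickening of H ∩ closedBall(c, R) has Lebesgue measure at most (2(R + δ))^(n−1) · 2δ; that is, λ({y : ∃ x ∈ H ∩ closedBall(c, R), ‖y − x‖ ≤ δ}) ≤ (2(R + δ))^(n−1) · 2δ. -/
open MeasureTheory Metric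

/-- The δ-thickening of the intersection of a hyperplane with a closed ball of radius `R`
has Lebesgue measure at most `(2(R+δ))^(n-1) · 2δ`. -/
theorem thickened_hyperplane_cap_measure
    (n : ℕ) (hn : 1 ≤ n)
    (H : AffineSubspace ℝ (EuclideanSpace ℝ (Fin n)))
    (hH : Module.finrank ℝ H.direction = n - 1)
    (c : EuclideanSpace ℝ (Fin n)) (R δ : ℝ) (hR : 0 < R) (hδ : 0 < δ) :
    volume {y : EuclideanSpace ℝ (Fin n) |
        ∃ x ∈ (H : Set (EuclideanSpace ℝ (Fin n))) ∩ closedBall c R, ‖y - x‖ ≤ δ} ≤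
      ENNReal.ofReal ((2 * (R + δ)) ^ (n - 1) * (2 * δ)) := by
  set S := {y : EuclideanSpace ℝ (Fin n) |
      ∃ x ∈ (H : Set (EuclideanSpace ℝ (Fin n))) ∩ closedBall c R, ‖y - x‖ ≤ δ} with hSdef
  rcases Set.eq_empty_or_nonempty S with hS | ⟨y0, x0, ⟨hx0H, hx0B⟩, hy0⟩
  · simp only [hS, measure_empty]; exact zero_le
  -- an orthogonal unit vector
  have hfr : Module.finrank ℝ (EuclideanSpace ℝ (Fin n)) = n := finrank_euclideanSpace_fin
  have horth : Module.finrank ℝ H.directionᗮ = 1 := by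
    have := Submodule.finrank_add_finrank_orthogonal (K := H.direction)
    omega
  obtain ⟨v, hvK, hv0⟩ : ∃ v, v ∈ H.directionᗮ ∧ v ≠ 0 := by
    apply Submodule.exists_mem_ne_zero_of_ne_bot
    intro h
    rw [h] at horth
    simp at horth
  set u : EuclideanSpace ℝ (Fin n) := ‖v‖⁻¹ • v with hu
  have hun : ‖u‖ = 1 := by
    rw [hu, norm_smul, norm_inv, norm_norm, inv_mul_cancel₀ (norm_ne_zero_iff.2 hv0)]
  have huK : u ∈ H.directionᗮ := Submodule.smul_mem _ _ hvK
  have i0 : Fin n := ⟨0, hn⟩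
  -- orthonormal basis extending u
  have hon : Orthonormal ℝ (({i0} : Set (Fin n)).restrict fun _ => u) := by
    refine ⟨fun _ => hun, fun i j hij => absurd ?_ hij⟩
    exact Subtype.ext (i.2.trans j.2.symm)
  obtain ⟨b, hb⟩ := hon.exists_orthonormalBasis_extension_of_card_eq (by simp [hfr])
  have hbi0 : b i0 = u := hb i0 rfl
  set q : EuclideanSpace ℝ (Fin n) := c + (inner ℝ u (x0 - c) : ℝ) • u with hq
  set r : Fin n → ℝ := fun i => if i = i0 then δ else R + δ with hr
  -- inclusion into a box
  have hsub : S ⊆ (fun y => b.repr (y - q)) ⁻¹'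
      (WithLp.ofLp ⁻¹' Set.pi Set.univ fun i => Set.Icc (-(r i)) (r i)) := by
    rintro y ⟨x, ⟨hxH, hxB⟩, hyx⟩ i _
    rw [Set.mem_Icc, ← abs_le]
    show |b.repr (y - q) i| ≤ r i
    rw [b.repr_apply_apply]
    by_cases hi : i = i0
    · subst hi
      rw [hbi0]
      have h1 : (inner ℝ u (y - q) : ℝ) = inner ℝ u (y - x) := by
        have hx0 : (inner ℝ u (x - x0) : ℝ) = 0 := by
          have := (Submodule.mem_orthogonal _ _).1 huK (x - x0)
            (AffineSubspace.vsub_mem_direction hxH hx0H)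
          rwa [real_inner_comm] at this
        have : (inner ℝ u (y - q) : ℝ)
            = inner ℝ u (y - x) + inner ℝ u (x - x0) + inner ℝ u (x0 - c)
              - (inner ℝ u (x0 - c) : ℝ) * inner ℝ u u := by
          rw [hq]
          simp only [inner_sub_right, inner_add_right, inner_smul_right]
          ring
        rw [this, hx0, real_inner_self_eq_norm_sq, hun]
        ring
      rw [h1]
      simp only [hr, if_pos rfl]
      calc |(inner ℝ u (y - x) : ℝ)| ≤ ‖u‖ * ‖y - x‖ := abs_real_inner_le_norm u _
        _ ≤ δ := by rw [hun, one_mul]; exact hyx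
    · have h2 : (inner ℝ (b i) (y - q) : ℝ) = inner ℝ (b i) (y - c) := by
        have hbu : (inner ℝ (b i) u : ℝ) = 0 := by
          rw [← hbi0]; exact b.orthonormal.2 hi
        rw [hq]
        simp only [inner_sub_right, inner_add_right, inner_smul_right, hbu]
        ring
      rw [h2]
      simp only [hr, if_neg hi]
      calc |(inner ℝ (b i) (y - c) : ℝ)| ≤ ‖b i‖ * ‖y - c‖ := abs_real_inner_le_norm _ _
        _ ≤ ‖y - c‖ := by rw [b.orthonormal.1 i, one_mul]
        _ ≤ ‖y - x‖ + ‖x - c‖ := norm_sub_le_norm_sub_add_norm_sub _ _ _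
        _ ≤ δ + R := by
            refine add_le_add hyx ?_
            have := mem_closedBall.1 hxB
            rwa [dist_eq_norm] at this
        _ = R + δ := by ring
  -- measure computation
  have mp : MeasurePreserving (fun y : EuclideanSpace ℝ (Fin n) => b.repr (y - q))
      volume volume :=
    b.measurePreserving_repr.comp (measurePreserving_sub_right volume q)
  have hbox : volume ((fun y : EuclideanSpace ℝ (Fin n) => b.repr (y - q)) ⁻¹'
      (WithLp.ofLp ⁻¹' Set.pi Set.univ fun i => Set.Icc (-(r i)) (r i)))
      = ∏ i, ENNReal.ofReal (2 * r i) := by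
    rw [mp.measure_preimage (by
      exact ((MeasurableSet.univ_pi fun i => measurableSet_Icc).preimage
        (PiLp.volume_preserving_ofLp (Fin n)).measurable).nullMeasurableSet)]
    have := (EuclideanSpace.volume_preserving_symm_measurableEquiv_toLp (Fin n)).measure_preimage
      (s := Set.pi Set.univ fun i => Set.Icc (-(r i)) (r i))
      (by exact (MeasurableSet.univ_pi fun i => measurableSet_Icc).nullMeasurableSet)
    rw [show (MeasurableEquiv.toLp 2 (Fin n → ℝ)).symm ⁻¹'
        (Set.pi Set.univ fun i => Set.Icc (-(r i)) (r i))
        = (WithLp.ofLp ⁻¹' Set.pi Set.univ fun i => Set.Icc (-(r i)) (r i)) from rfl] at this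
    rw [this, volume_pi_pi]
    congr 1
    ext i
    rw [Real.volume_Icc]
    congr 1
    ring
  have hrpos : ∀ i, 0 ≤ r i := by
    intro i; rw [hr]; dsimp only
    split <;> positivity
  have hprod : (∏ i, ENNReal.ofReal (2 * r i))
      = ENNReal.ofReal ((2 * (R + δ)) ^ (n - 1) * (2 * δ)) := by
    rw [← Finset.prod_erase_mul _ _ (Finset.mem_univ i0)]
    have h1 : ∀ i ∈ Finset.univ.erase i0, ENNReal.ofReal (2 * r i)
        = ENNReal.ofReal (2 * (R + δ)) := by
      intro i hi
      rw [hr]; simp [Finset.mem_erase.1 hi |>.1]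
    rw [Finset.prod_congr rfl h1, Finset.prod_const, Finset.card_erase_of_mem (Finset.mem_univ i0),
      Finset.card_univ, Fintype.card_fin]
    have hri0 : r i0 = δ := if_pos rfl
    rw [hri0, ← ENNReal.ofReal_pow (by positivity), ← ENNReal.ofReal_mul (by positivity)]
  calc volume S ≤ _ := measure_mono hsub
    _ = _ := hbox
    _ = _ := hprod
end

section
/- For every n ≥ 1 there is a constant K > 0, depending only on n, with the following property (the 'one third trick'): for every x ∈ ℝⁿ and every radius 0 < r < 1/3, there exist a translation vector t ∈ ℝⁿ with every coordinate in {0, 1/3, 2/3}, an integer s, and k ∈ ℤⁿ, such that the ball B(x, r) is contained in the translated dyadic cube Q = t + Πⱼ [kⱼ·2^{−s}, (kⱼ+1)·2^{−s}] and the side length of Q satisfies 2^{−s} ≤ K · r. -/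
set_option maxHeartbeats 1000000

open Metric

lemma exists_scale (r : ℝ) (hr : 0 < r) :
    ∃ s : ℤ, 6*r ≤ (2:ℝ)^(-s) ∧ (2:ℝ)^(-s) < 12*r := by
  refine ⟨-⌈Real.logb 2 (6*r)⌉, ?_, ?_⟩ <;> rw [neg_neg]
  · have h1 : (6*r : ℝ) = 2 ^ (Real.logb 2 (6*r)) :=
      (Real.rpow_logb (by norm_num) (by norm_num) (by positivity)).symm
    have h2 : (2:ℝ) ^ (Real.logb 2 (6*r)) ≤ 2 ^ ((⌈Real.logb 2 (6*r)⌉ : ℝ)) :=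
      Real.rpow_le_rpow_of_exponent_le (by norm_num) (Int.le_ceil _)
    calc 6*r = 2 ^ (Real.logb 2 (6*r)) := h1
    _ ≤ (2:ℝ) ^ ((⌈Real.logb 2 (6*r)⌉ : ℝ)) := h2
    _ = (2:ℝ) ^ (⌈Real.logb 2 (6*r)⌉:ℤ) := Real.rpow_intCast 2 _
  · have h2 : (2:ℝ) ^ ((⌈Real.logb 2 (6*r)⌉ : ℝ)) < 2 ^ (Real.logb 2 (6*r) + 1) :=
      Real.rpow_lt_rpow_of_exponent_lt (by norm_num) (Int.ceil_lt_add_one _)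
    have h3 : (2:ℝ) ^ (Real.logb 2 (6*r) + 1) = 12 * r := by
      rw [Real.rpow_add (by norm_num), Real.rpow_logb (by norm_num) (by norm_num) (by positivity)]
      ring
    calc (2:ℝ) ^ (⌈Real.logb 2 (6*r)⌉:ℤ) = (2:ℝ) ^ ((⌈Real.logb 2 (6*r)⌉ : ℝ)) :=
          (Real.rpow_intCast 2 _).symm
    _ < 2 ^ (Real.logb 2 (6*r) + 1) := h2
    _ = 12 * r := h3

lemma no_grid (s : ℤ) (r a : ℝ) (hr : 0 < r) (hr3 : r < 1/3) (h6 : 6*r ≤ (2:ℝ)^(-s)) :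
    ∃ t ∈ ({0, 1/3, 2/3} : Set ℝ),
      ∀ m : ℤ, t + m * (2:ℝ)^(-s) ∉ Set.Ioo (a - r) (a + r) := by
  by_contra hcon
  push_neg at hcon
  obtain ⟨m0, hm0⟩ := hcon 0 (by simp)
  obtain ⟨m1, hm1⟩ := hcon (1/3) (by simp)
  obtain ⟨m2, hm2⟩ := hcon (2/3) (by simp)
  set h : ℝ := (2:ℝ)^(-s) with hh_def
  have hhpos : 0 < h := by positivity
  set u : ℝ := (2:ℝ)^s with hu_def
  have hupos : 0 < u := by positivity
  have hhu : h * u = 1 := by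
    rw [hh_def, hu_def, ← zpow_add₀ (two_ne_zero)]
    simp
  clear_value h u
  clear hcon
  simp only [Set.mem_Ioo] at hm0 hm1 hm2
  set A : ℤ := m1 - m0 with hA
  set B : ℤ := m2 - m1 with hB
  clear_value A B
  have e1 : (1/3 + (m1:ℝ) * h) - (0 + m0 * h) = 1/3 + A * h := by push_cast [hA]; ring
  have e2 : (2/3 + (m2:ℝ) * h) - (1/3 + m1 * h) = 1/3 + B * h := by push_cast [hB]; ring
  have d1 : |1/3 + (A:ℝ) * h| < 2*r := by
    rw [← e1, abs_lt]; constructor <;> linarith [hm0.1, hm0.2, hm1.1, hm1.2]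
  have d2 : |1/3 + (B:ℝ) * h| < 2*r := by
    rw [← e2, abs_lt]; constructor <;> linarith [hm1.1, hm1.2, hm2.1, hm2.2]
  have d12 : |2/3 + ((A:ℝ) + B) * h| < 2*r := by
    have e3 : (2/3 + (m2:ℝ) * h) - (0 + m0 * h) = 2/3 + ((A:ℝ)+B) * h := by
      push_cast [hA, hB]; ring
    rw [← e3, abs_lt]; constructor <;> linarith [hm0.1, hm0.2, hm2.1, hm2.2]
  have key : ∀ c : ℝ, |c| < 2*r → |c * u| < 1/3 := by
    intro c hc
    have habs : |c * u| = |c| * u := by rw [abs_mul, abs_of_pos hupos]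
    rw [habs]
    have h1 : |c| * u < 2*r*u := mul_lt_mul_of_pos_right hc hupos
    have h2 : 2*r*u ≤ (h/3)*u := by nlinarith
    have h3 : (h/3)*u = 1/3 := by
      have : (h/3)*u = (h*u)/3 := by ring
      rw [this, hhu]
    linarith
  have f1 : (1/3 + (A:ℝ) * h) * u = u/3 + A := by
    have he : (1/3 + (A:ℝ) * h) * u = u/3 + (A:ℝ) * (h * u) := by ring
    rw [he, hhu, mul_one]
  have f2 : (1/3 + (B:ℝ) * h) * u = u/3 + B := by
    have he : (1/3 + (B:ℝ) * h) * u = u/3 + (B:ℝ) * (h * u) := by ring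
    rw [he, hhu, mul_one]
  have f12 : (2/3 + ((A:ℝ) + B) * h) * u = 2*u/3 + A + B := by
    have he : (2/3 + ((A:ℝ) + B) * h) * u = 2*u/3 + ((A:ℝ)+B) * (h * u) := by ring
    rw [he, hhu]; ring
  have hf : |u/3 + (A:ℝ)| < 1/3 := by rw [← f1]; exact key _ d1
  have hg : |u/3 + (B:ℝ)| < 1/3 := by rw [← f2]; exact key _ d2
  have hfg : |2*u/3 + (A:ℝ) + B| < 1/3 := by rw [← f12]; exact key _ d12
  have hAB : A = B := by
    have h1 : |(A:ℝ) - B| < 1 := by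
      have he : (A:ℝ) - B = (u/3 + A) - (u/3 + B) := by ring
      rw [he]
      calc |(u/3 + (A:ℝ)) - (u/3 + B)| ≤ |u/3 + (A:ℝ)| + |u/3 + (B:ℝ)| := abs_sub _ _
      _ < 1 := by linarith
    have h2 : |((A - B : ℤ) : ℝ)| < 1 := by push_cast; exact h1
    have h3 : |A - B| < 1 := by exact_mod_cast h2
    rw [abs_lt] at h3
    omega
  subst hAB
  have h3f : |u + 3*(A:ℝ)| < 1/2 := by
    have he : u + 3*(A:ℝ) = (3/2) * (2*u/3 + A + A) := by ring
    rw [he, abs_mul]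
    have h32 : |(3/2 : ℝ)| = 3/2 := by norm_num
    rw [h32]
    nlinarith [hfg, abs_nonneg (2*u/3 + (A:ℝ) + A)]
  rcases le_or_gt 0 s with hs | hs
  · have hN : u = (2:ℝ)^(s.toNat) := by
      rw [hu_def, show s = (s.toNat : ℤ) by omega, zpow_natCast]; congr 1
    have h4 : |((2^s.toNat + 3*A : ℤ) : ℝ)| < 1/2 := by push_cast; rw [← hN]; exact h3f
    have hz : (2^s.toNat + 3*A : ℤ) = 0 := by
      by_contra hne
      have h5 : (1:ℝ) ≤ |((2^s.toNat + 3*A : ℤ) : ℝ)| := by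
        rw [← Int.cast_abs]
        exact_mod_cast Int.one_le_abs hne
      linarith
    have hdvd : (3:ℤ) ∣ 2^s.toNat := ⟨-A, by linarith [hz]⟩
    have := Int.Prime.dvd_pow' (p := 3) (by norm_num) hdvd
    norm_num at this
  · have hu2 : u ≤ 1/2 := by
      have h5 : (2:ℝ)^s ≤ (2:ℝ)^(-1 : ℤ) :=
        zpow_le_zpow_right₀ (by norm_num) (by omega)
      rw [hu_def]
      simpa using h5
    have hA0 : A = 0 := by
      have h5 : |((3*A : ℤ) : ℝ)| < 3/2 := by
        push_cast
        have he : (3:ℝ)*A = (u + 3*A) - u := by ring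
        rw [he]
        calc |(u + 3*(A:ℝ)) - u| ≤ |u + 3*(A:ℝ)| + |u| := abs_sub _ _
        _ < 3/2 := by rw [abs_of_pos hupos]; linarith
      have h6 : |3*A| < 2 := by
        have : |((3*A : ℤ) : ℝ)| < 2 := by linarith
        exact_mod_cast this
      rw [abs_lt] at h6
      omega
    subst hA0
    simp only [Int.cast_zero, add_zero, zero_mul] at d12
    rw [abs_of_pos (by norm_num)] at d12
    linarith

lemma cube_of_no_grid (s : ℤ) (t a r : ℝ) (hr : 0 < r) (h6 : 6*r ≤ (2:ℝ)^(-s))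
    (hno : ∀ m : ℤ, t + m * (2:ℝ)^(-s) ∉ Set.Ioo (a - r) (a + r)) :
    ∃ k : ℤ, Set.Ioo (a - r) (a + r) ⊆
      Set.Icc (t + k * (2:ℝ)^(-s)) (t + ((k:ℝ)+1) * (2:ℝ)^(-s)) := by
  set h : ℝ := (2:ℝ)^(-s) with hh_def
  have hhpos : 0 < h := by positivity
  set k0 : ℤ := ⌈(a - r - t)/h⌉ with hk0_def
  have hk0 : a - r ≤ t + k0 * h := by
    have := Int.le_ceil ((a - r - t)/h)
    rw [div_le_iff₀ hhpos] at this
    linarith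
  by_cases hcase : a + r ≤ t + k0 * h
  · refine ⟨k0 - 1, fun y hy => ?_⟩
    simp only [Set.mem_Ioo] at hy
    have hlow : t + ((k0:ℝ) - 1) * h ≤ a - r := by
      have := Int.ceil_lt_add_one ((a - r - t)/h)
      have h2 : ((k0:ℝ) - 1) < (a - r - t)/h := by
        rw [hk0_def] at *; push_cast at *; linarith
      rw [lt_div_iff₀ hhpos] at h2
      linarith
    constructor
    · push_cast; linarith [hy.1]
    · push_cast; linarith [hy.2]
  · push_neg at hcase
    have heq : t + k0 * h = a - r := by
      have := hno k0
      simp only [Set.mem_Ioo, not_and, not_lt] at this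
      rcases lt_or_ge (a - r) (t + k0 * h) with h1 | h1
      · exact absurd hcase (not_lt.mpr (this h1))
      · linarith
    refine ⟨k0, fun y hy => ?_⟩
    simp only [Set.mem_Ioo] at hy
    constructor
    · linarith [hy.1]
    · push_cast; linarith [hy.2]

/-- The "one third trick": there is a constant `K > 0`, depending only on `n`, such that
every ball of radius `0 < r < 1/3` in ℝⁿ is contained in some dyadic cube translated by a
vector with coordinates in `{0, 1/3, 2/3}`, of side length at most `K·r`. -/
theorem one_third_trick (n : ℕ) (hn : 1 ≤ n) :
    ∃ K : ℝ, 0 < K ∧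
      ∀ (x : EuclideanSpace ℝ (Fin n)) (r : ℝ), 0 < r → r < 1 / 3 →
        ∃ (t : Fin n → ℝ) (s : ℤ) (k : Fin n → ℤ),
          (∀ j, t j ∈ ({0, 1/3, 2/3} : Set ℝ)) ∧
          (ball x r ⊆ {y : EuclideanSpace ℝ (Fin n) |
            ∀ j, y j ∈ Set.Icc (t j + k j * (2:ℝ) ^ (-s)) (t j + (k j + 1) * (2:ℝ) ^ (-s))}) ∧
          (2:ℝ) ^ (-s) ≤ K * r := by
  refine ⟨12, by norm_num, fun x r hr hr3 => ?_⟩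
  obtain ⟨s, hs1, hs2⟩ := exists_scale r hr
  have hchoice : ∀ j : Fin n, ∃ t ∈ ({0, 1/3, 2/3} : Set ℝ), ∃ k : ℤ,
      Set.Ioo (x j - r) (x j + r) ⊆
        Set.Icc (t + k * (2:ℝ)^(-s)) (t + ((k:ℝ)+1) * (2:ℝ)^(-s)) := by
    intro j
    obtain ⟨t, ht, hno⟩ := no_grid s r (x j) hr hr3 hs1
    obtain ⟨k, hk⟩ := cube_of_no_grid s t (x j) r hr hs1 hno
    exact ⟨t, ht, k, hk⟩
  choose t ht k hk using hchoice
  refine ⟨t, s, k, ht, ?_, by linarith⟩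
  intro y hy
  simp only [Set.mem_setOf_eq]
  intro j
  apply hk j
  rw [mem_ball] at hy
  have hdj : dist (y j) (x j) ≤ dist y x := by
    rw [EuclideanSpace.dist_eq]
    have h1 : dist (y j) (x j) ^ 2 ≤ ∑ i, dist (y i) (x i) ^ 2 := by
      apply Finset.single_le_sum (f := fun i => dist (y i) (x i) ^ 2)
        (fun i _ => by positivity) (Finset.mem_univ j)
    calc dist (y j) (x j) = Real.sqrt (dist (y j) (x j) ^ 2) :=
          (Real.sqrt_sq dist_nonneg).symm
    _ ≤ Real.sqrt (∑ i, dist (y i) (x i) ^ 2) := Real.sqrt_le_sqrt h1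
  have : |y j - x j| < r := by
    rw [← Real.dist_eq]
    exact lt_of_le_of_lt hdj hy
  rw [abs_lt] at this
  exact Set.mem_Ioo.mpr ⟨by linarith [this.1], by linarith [this.2]⟩
end
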